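/- The quintic polynomial Q = z1^3 z2^2 + 2 z1^2 z2^3 + z1 z2^4 + 2 z1^3 z2 z3 + 4 z1^2 z2^2 z3 + 2 z1 z2^3 z3 + z1^3 z3^2 - 4 z1^2 z2 z3^2 - 9 z1 z2^2 z3^2 - 4 z2^3 z3^2 - 2 z1^2 z3^3 + 2 z1 z2 z3^3 + 4 z2^2 z3^3 + z1 z3^4 is irreducible over ℚ. -/

import Mathlib

open MvPolynomial

/-- The quintic `Q` from the heptagon construction, as a polynomial over `ℚ`. -/
noncomputable def hepQpoly : MvPolynomial (Fin 3) ℚ :=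
  X 0 ^ 3 * X 1 ^ 2 + 2 * X 0 ^ 2 * X 1 ^ 3 + X 0 * X 1 ^ 4 + 2 * X 0 ^ 3 * X 1 * X 2
    + 4 * X 0 ^ 2 * X 1 ^ 2 * X 2 + 2 * X 0 * X 1 ^ 3 * X 2 + X 0 ^ 3 * X 2 ^ 2
    - 4 * X 0 ^ 2 * X 1 * X 2 ^ 2 - 9 * X 0 * X 1 ^ 2 * X 2 ^ 2 - 4 * X 1 ^ 3 * X 2 ^ 2
    - 2 * X 0 ^ 2 * X 2 ^ 3 + 2 * X 0 * X 1 * X 2 ^ 3 + 4 * X 1 ^ 2 * X 2 ^ 3 + X 0 * X 2 ^ 4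

namespace HepAux

noncomputable def c3 : MvPolynomial (Fin 2) ℚ := X 0 ^ 2 + 2 * X 0 * X 1 + X 1 ^ 2
noncomputable def c2 : MvPolynomial (Fin 2) ℚ :=
  2 * X 0 ^ 3 + 4 * X 0 ^ 2 * X 1 - 4 * X 0 * X 1 ^ 2 - 2 * X 1 ^ 3
noncomputable def c1 : MvPolynomial (Fin 2) ℚ :=
  X 0 ^ 4 + 2 * X 0 ^ 3 * X 1 - 9 * X 0 ^ 2 * X 1 ^ 2 + 2 * X 0 * X 1 ^ 3 + X 1 ^ 4
noncomputable def c0 : MvPolynomial (Fin 2) ℚ :=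
  -(4 * X 0 ^ 3 * X 1 ^ 2) + 4 * X 0 ^ 2 * X 1 ^ 3

lemma hEQ : MvPolynomial.finSuccEquiv ℚ 2 hepQpoly =
    Polynomial.C c3 * Polynomial.X ^ 3 + Polynomial.C c2 * Polynomial.X ^ 2
      + Polynomial.C c1 * Polynomial.X + Polynomial.C c0 := by
  have h1 : (X 1 : MvPolynomial (Fin 3) ℚ) = X (Fin.succ 0) := rfl
  have h2 : (X 2 : MvPolynomial (Fin 3) ℚ) = X (Fin.succ 1) := rfl
  rw [hepQpoly, h1, h2]
  simp only [c3, c2, c1, c0, map_add, map_sub, map_mul, map_pow, map_neg, map_ofNat,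
    MvPolynomial.finSuccEquiv_X_zero, MvPolynomial.finSuccEquiv_X_succ]
  ring

lemma coeffP3 : (MvPolynomial.finSuccEquiv ℚ 2 hepQpoly).coeff 3 = c3 := by
  rw [hEQ]; simp

lemma coeffP2 : (MvPolynomial.finSuccEquiv ℚ 2 hepQpoly).coeff 2 = c2 := by
  rw [hEQ]; simp

lemma c3_ne : c3 ≠ 0 := by
  intro h
  have := congrArg (eval ![(1:ℚ), 1]) h
  simp [c3] at this
  norm_num at this

lemma natdegP : (MvPolynomial.finSuccEquiv ℚ 2 hepQpoly).natDegree = 3 := by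
  rw [hEQ]
  compute_degree!
  exact c3_ne

lemma lcP : (MvPolynomial.finSuccEquiv ℚ 2 hepQpoly).leadingCoeff = c3 := by
  rw [Polynomial.leadingCoeff, natdegP, coeffP3]

lemma evc3 : eval ![(2:ℚ), -1] c3 = 1 := by
  simp [c3]
  norm_num

noncomputable def qQ : Polynomial ℚ :=
  Polynomial.X ^ 3 - Polynomial.C 6 * Polynomial.X ^ 2 - Polynomial.C 39 * Polynomial.X
    - Polynomial.C 48

noncomputable def qZ : Polynomial ℤ :=
  Polynomial.X ^ 3 - Polynomial.C 6 * Polynomial.X ^ 2 - Polynomial.C 39 * Polynomial.X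
    - Polynomial.C 48

lemma evc2 : eval ![(2:ℚ), -1] c2 = -6 := by
  simp [c2]
  norm_num

lemma evc1 : eval ![(2:ℚ), -1] c1 = -39 := by
  simp [c1]
  norm_num

lemma evc0 : eval ![(2:ℚ), -1] c0 = -48 := by
  simp [c0]
  norm_num

lemma hmapq : (MvPolynomial.finSuccEquiv ℚ 2 hepQpoly).map (eval ![(2:ℚ), -1]) = qQ := by
  rw [hEQ]
  simp only [Polynomial.map_add, Polynomial.map_mul, Polynomial.map_pow, Polynomial.map_C,
    Polynomial.map_X, evc3, evc2, evc1, evc0, qQ, map_one, map_neg]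
  ring

lemma qZ_monic : qZ.Monic := by
  unfold qZ
  monicity!

lemma key5 : ∀ y : ZMod 5, y ^ 3 - 6 * y ^ 2 - 39 * y - 48 ≠ 0 := by decide

lemma qZ_irr : Irreducible qZ := by
  haveI : Fact (Nat.Prime 5) := ⟨by norm_num⟩
  apply qZ_monic.irreducible_of_irreducible_map (Int.castRingHom (ZMod 5))
  have hm : qZ.map (Int.castRingHom (ZMod 5)) =
      Polynomial.X ^ 3 - Polynomial.C 6 * Polynomial.X ^ 2 - Polynomial.C 39 * Polynomial.X
        - Polynomial.C 48 := by
    simp [qZ, map_ofNat]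
  rw [hm]
  have h3 : (Polynomial.X ^ 3 - Polynomial.C 6 * Polynomial.X ^ 2
      - Polynomial.C 39 * Polynomial.X - Polynomial.C 48 : Polynomial (ZMod 5)).natDegree = 3 := by
    compute_degree!
  rw [Polynomial.irreducible_iff_roots_eq_zero_of_degree_le_three (by simp [h3]) (by simp [h3])]
  apply Multiset.eq_zero_of_forall_notMem
  intro x hx
  rw [Polynomial.mem_roots'] at hx
  have h2 := hx.2
  simp only [Polynomial.IsRoot, Polynomial.eval_sub, Polynomial.eval_mul, Polynomial.eval_pow,
    Polynomial.eval_C, Polynomial.eval_X] at h2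
  exact key5 x h2

lemma qQ_irr : Irreducible qQ := by
  have h := (Polynomial.IsPrimitive.Int.irreducible_iff_irreducible_map_cast
    qZ_monic.isPrimitive).mp qZ_irr
  have hm : qZ.map (Int.castRingHom ℚ) = qQ := by simp [qZ, qQ, map_ofNat]
  rwa [hm] at h

lemma prime_pi : Prime ((X 0 + X 1 : MvPolynomial (Fin 2) ℚ)) := by
  have h : Prime (MvPolynomial.finSuccEquiv ℚ 1 (X 0 + X 1)) := by
    have h1 : (X 1 : MvPolynomial (Fin 2) ℚ) = X (Fin.succ 0) := rfl
    rw [map_add, MvPolynomial.finSuccEquiv_X_zero, h1, MvPolynomial.finSuccEquiv_X_succ]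
    simpa [sub_neg_eq_add] using Polynomial.prime_X_sub_C (R := MvPolynomial (Fin 1) ℚ) (-(X 0))
  exact (MulEquiv.prime_iff (MvPolynomial.finSuccEquiv ℚ 1)).mp h

lemma aux (A B : MvPolynomial (Fin 3) ℚ) (h : hepQpoly = A * B)
    (hu : IsUnit ((MvPolynomial.finSuccEquiv ℚ 2 A).map (eval ![(2:ℚ), -1]))) : IsUnit A := by
  set w : Fin 2 → ℚ := ![2, -1] with hw
  set A' := MvPolynomial.finSuccEquiv ℚ 2 A with hA'
  set B' := MvPolynomial.finSuccEquiv ℚ 2 B with hB'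
  have hP : MvPolynomial.finSuccEquiv ℚ 2 hepQpoly = A' * B' := by rw [h, map_mul]
  have hlc : A'.leadingCoeff * B'.leadingCoeff = c3 := by
    rw [← Polynomial.leadingCoeff_mul, ← hP, lcP]
  have he1 : eval w A'.leadingCoeff * eval w B'.leadingCoeff = 1 := by
    rw [← map_mul, hlc]; exact evc3
  have hne : eval w A'.leadingCoeff ≠ 0 := left_ne_zero_of_mul_eq_one he1
  have hdeg : A'.natDegree = 0 := by
    rw [← Polynomial.natDegree_map_of_leadingCoeff_ne_zero (eval w) hne]
    exact Polynomial.natDegree_eq_zero_of_isUnit hu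
  have haC : A' = Polynomial.C (A'.coeff 0) := Polynomial.eq_C_of_natDegree_eq_zero hdeg
  set a := A'.coeff 0 with ha
  have hd3 : a ∣ c3 := ⟨B'.coeff 3, by rw [← coeffP3, hP, haC, Polynomial.coeff_C_mul]⟩
  have hd2 : a ∣ c2 := ⟨B'.coeff 2, by rw [← coeffP2, hP, haC, Polynomial.coeff_C_mul]⟩
  have hua : IsUnit a := by
    by_contra hnu
    have ha0 : a ≠ 0 := by
      intro h0
      apply c3_ne
      obtain ⟨t, ht⟩ := hd3
      rw [ht, h0, zero_mul]
    obtain ⟨q, hqirr, hqa⟩ := WfDvdMonoid.exists_irreducible_factor hnu ha0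
    have hqp : Prime q := UniqueFactorizationMonoid.irreducible_iff_prime.mp hqirr
    have hqsq : q ∣ (X 0 + X 1 : MvPolynomial (Fin 2) ℚ) ^ 2 := by
      refine (hqa.trans hd3).trans (dvd_of_eq ?_)
      rw [c3]; ring
    have hqpi : q ∣ (X 0 + X 1 : MvPolynomial (Fin 2) ℚ) := hqp.dvd_of_dvd_pow hqsq
    have hpiq : (X 0 + X 1 : MvPolynomial (Fin 2) ℚ) ∣ q :=
      hqirr.dvd_symm prime_pi.irreducible hqpi
    have hpic2 : (X 0 + X 1 : MvPolynomial (Fin 2) ℚ) ∣ c2 := hpiq.trans (hqa.trans hd2)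
    obtain ⟨t, ht⟩ := hpic2
    have hev := congrArg (eval ![(1:ℚ), -1]) ht
    simp [c2] at hev
    norm_num at hev
  have hA'u : IsUnit A' := by rw [haC]; exact hua.map Polynomial.C
  have h2 : IsUnit ((MvPolynomial.finSuccEquiv ℚ 2).symm A') :=
    hA'u.map (MvPolynomial.finSuccEquiv ℚ 2).symm
  rwa [hA', AlgEquiv.symm_apply_apply] at h2

end HepAux

open HepAux in
/-- The quintic `Q` is irreducible over `ℚ`. -/
theorem hepQ_irreducible : Irreducible hepQpoly := by
  constructor
  · intro h
    have h1 : IsUnit ((MvPolynomial.finSuccEquiv ℚ 2 hepQpoly).map (eval ![(2:ℚ), -1])) := by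
      have := (h.map (MvPolynomial.finSuccEquiv ℚ 2)).map
        (Polynomial.mapRingHom (eval ![(2:ℚ), -1]))
      simpa [Polynomial.coe_mapRingHom] using this
    rw [hmapq] at h1
    exact qQ_irr.not_isUnit h1
  · intro A B hAB
    have hq : qQ = ((MvPolynomial.finSuccEquiv ℚ 2 A).map (eval ![(2:ℚ), -1]))
        * ((MvPolynomial.finSuccEquiv ℚ 2 B).map (eval ![(2:ℚ), -1])) := by
      rw [← Polynomial.map_mul, ← map_mul, ← hAB, hmapq]
    rcases qQ_irr.isUnit_or_isUnit hq with h | h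
    · exact Or.inl (aux A B hAB h)
    · exact Or.inr (aux B A (by rw [hAB, mul_comm]) h)
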